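/- arXiv:2102.07131 — 3 statements merged into one kernel-verified Lean document; each statement's English description precedes it below -/
import Mathlib

section
/- Let X be a type, S ⊆ X a nonempty feasible set, D a finite nonempty index type, δ : X → (D → ℝ) such that δ x is a selection vector for every x ∈ S, g : X → ℝ, φ : X → (D → ℝ), and M : D → ℝ with M d ≥ φ x d' - φ x d for all x ∈ S and d, d' ∈ D. If the set {g x + ∑_{d ∈ D} δ x d * φ x d | x ∈ S} is bounded above, then sSup {g x + θ | x ∈ S, θ ∈ ℝ, ∀ d ∈ D, θ ≤ φ x d + M d * (1 - δ x d)} = sSup {g x + ∑_{d ∈ D} δ x d * φ x d | x ∈ S}; i.e., the big-M reformulation has the same optimal value as the bilinear formulation. -/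
/-- For a feasible `x`, there is an index `d*` with `δ x d* = 1` and all other
coordinates zero. -/
lemma exists_indicator {D : Type*} [Fintype D]
    (f : D → ℝ) (h01 : ∀ d, f d = 0 ∨ f d = 1) (hsum : ∑ d, f d = 1) :
    ∃ d₀, f d₀ = 1 ∧ ∀ d, d ≠ d₀ → f d = 0 := by
  classical
  have : ∃ d₀, f d₀ = 1 := by
    by_contra h
    push_neg at h
    have : ∀ d, f d = 0 := fun d => (h01 d).resolve_right (h d)
    simp [this] at hsum
  obtain ⟨d₀, hd₀⟩ := this
  refine ⟨d₀, hd₀, ?_⟩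
  have hsplit : f d₀ + ∑ d ∈ Finset.univ.erase d₀, f d = 1 := by
    rw [Finset.add_sum_erase _ _ (Finset.mem_univ d₀)]; exact hsum
  have hzero : ∑ d ∈ Finset.univ.erase d₀, f d = 0 := by linarith [hsplit, hd₀]
  intro d hd
  have hnn : ∀ d ∈ Finset.univ.erase d₀, 0 ≤ f d := by
    intro d _
    rcases h01 d with h | h <;> simp [h]
  exact (Finset.sum_eq_zero_iff_of_nonneg hnn).mp hzero d
    (Finset.mem_erase.mpr ⟨hd, Finset.mem_univ d⟩)

/-- The big-M reformulation has the same optimal value as the bilinear formulation: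
if `δ x` is a selection vector for every feasible `x`, constants `M d` are valid
(`M d ≥ φ x d' - φ x d` for all feasible `x` and all `d, d'`), and the bilinear
objective values are bounded above, then the suprema of the two formulations agree. -/
theorem bigM_reformulation_same_value {X : Type*} {D : Type*} [Fintype D] [Nonempty D]
    (S : Set X) (hS : S.Nonempty)
    (δ : X → D → ℝ)
    (hsel : ∀ x ∈ S, (∀ d, δ x d = 0 ∨ δ x d = 1) ∧ ∑ d, δ x d = 1)
    (g : X → ℝ) (φ : X → D → ℝ) (M : D → ℝ)
    (hM : ∀ x ∈ S, ∀ d d', M d ≥ φ x d' - φ x d)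
    (hbdd : BddAbove {v : ℝ | ∃ x ∈ S, v = g x + ∑ d, δ x d * φ x d}) :
    sSup {v : ℝ | ∃ x ∈ S, ∃ θ : ℝ, (∀ d, θ ≤ φ x d + M d * (1 - δ x d)) ∧ v = g x + θ}
      = sSup {v : ℝ | ∃ x ∈ S, v = g x + ∑ d, δ x d * φ x d} := by
  set L := {v : ℝ | ∃ x ∈ S, ∃ θ : ℝ, (∀ d, θ ≤ φ x d + M d * (1 - δ x d)) ∧ v = g x + θ}
  set R := {v : ℝ | ∃ x ∈ S, v = g x + ∑ d, δ x d * φ x d}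
  -- key: for x ∈ S, the bilinear value is φ x d₀ where d₀ is the selected index
  have key : ∀ x ∈ S, ∃ d₀, δ x d₀ = 1 ∧ (∀ d, d ≠ d₀ → δ x d = 0) ∧
      (∑ d, δ x d * φ x d) = φ x d₀ := by
    intro x hx
    obtain ⟨h01, hsum⟩ := hsel x hx
    obtain ⟨d₀, h1, h0⟩ := exists_indicator (δ x) h01 hsum
    refine ⟨d₀, h1, h0, ?_⟩
    rw [Finset.sum_eq_single d₀]
    · rw [h1]; ring
    · intro d _ hd; rw [h0 d hd]; ring
    · intro h; exact absurd (Finset.mem_univ d₀) h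
  -- R ⊆ L
  have hRL : R ⊆ L := by
    intro v hv
    obtain ⟨x, hx, rfl⟩ := hv
    obtain ⟨d₀, h1, h0, hval⟩ := key x hx
    refine ⟨x, hx, ∑ d, δ x d * φ x d, ?_, rfl⟩
    intro d
    rw [hval]
    by_cases hd : d = d₀
    · subst hd; rw [h1]; simp
    · rw [h0 d hd]
      have := hM x hx d d₀
      linarith
  -- every element of L is bounded by an element of R
  have hLub : ∀ v ∈ L, v ≤ sSup R := by
    intro v hv
    obtain ⟨x, hx, θ, hθ, rfl⟩ := hv
    obtain ⟨d₀, h1, h0, hval⟩ := key x hx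
    have hθle : θ ≤ φ x d₀ := by
      have := hθ d₀
      rw [h1] at this
      simpa using this
    have hmem : g x + ∑ d, δ x d * φ x d ∈ R := ⟨x, hx, rfl⟩
    have := le_csSup hbdd hmem
    rw [hval] at this
    linarith
  have hLne : L.Nonempty := by
    obtain ⟨x, hx⟩ := hS
    exact ⟨_, hRL ⟨x, hx, rfl⟩⟩
  apply le_antisymm
  · exact csSup_le hLne hLub
  · obtain ⟨x, hx⟩ := hS
    exact csSup_le_csSup ⟨sSup R, hLub⟩ ⟨_, x, hx, rfl⟩ hRL
end

section
/- Let X and Z be types, D a finite nonempty index type, and S ⊆ X × (D → ℝ) a nonempty set such that for every (x,δ) ∈ S, δ is a selection vector. Let f : X × (D → ℝ) → ℝ, and for each d ∈ D let Y d ⊆ Z be nonempty and V d : Z → ℝ be bounded above on Y d, with Φ d := sSup (V d '' Y d). If the set { f (x,δ) + ∑_{d ∈ D} δ d * Φ d | (x,δ) ∈ S } is bounded above, then sSup { f (x,δ) + ∑_{d ∈ D} δ d * V d (y d) | (x,δ) ∈ S, y : D → Z with y d ∈ Y d for all d } = sSup { f (x,δ) + ∑_{d ∈ D} δ d * Φ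 d | (x,δ) ∈ S }. -/
/-- Bellman exchange underlying the exactness of the backward algorithm:
fixing the optimal continuation values `Φ d = sSup (V d '' Y d)` in advance does
not change the optimal value of the joint problem. -/
theorem bellman_exchange {X Z : Type*} {D : Type*} [Fintype D] [Nonempty D]
    (S : Set (X × (D → ℝ))) (hS : S.Nonempty)
    (hsel : ∀ p ∈ S, (∀ d, p.2 d = 0 ∨ p.2 d = 1) ∧ ∑ d, p.2 d = 1)
    (f : X × (D → ℝ) → ℝ)
    (Y : D → Set Z) (hY : ∀ d, (Y d).Nonempty)
    (V : D → Z → ℝ) (hV : ∀ d, BddAbove (V d '' Y d))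
    (Φ : D → ℝ) (hΦ : ∀ d, Φ d = sSup (V d '' Y d))
    (hbdd : BddAbove {v : ℝ | ∃ p ∈ S, v = f p + ∑ d, p.2 d * Φ d}) :
    sSup {v : ℝ | ∃ p ∈ S, ∃ y : D → Z, (∀ d, y d ∈ Y d) ∧
          v = f p + ∑ d, p.2 d * V d (y d)}
      = sSup {v : ℝ | ∃ p ∈ S, v = f p + ∑ d, p.2 d * Φ d} := by
  classical
  set A := {v : ℝ | ∃ p ∈ S, ∃ y : D → Z, (∀ d, y d ∈ Y d) ∧
      v = f p + ∑ d, p.2 d * V d (y d)} with hA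
  set B := {v : ℝ | ∃ p ∈ S, v = f p + ∑ d, p.2 d * Φ d} with hB
  have hnonneg : ∀ p ∈ S, ∀ d, (0:ℝ) ≤ p.2 d := by
    intro p hp d
    rcases (hsel p hp).1 d with h | h <;> rw [h] <;> norm_num
  -- every element of A is ≤ a corresponding element of B
  have hAleB : ∀ a ∈ A, ∃ b ∈ B, a ≤ b := by
    rintro a ⟨p, hp, y, hy, rfl⟩
    refine ⟨f p + ∑ d, p.2 d * Φ d, ⟨p, hp, rfl⟩, ?_⟩
    gcongr with d _
    · exact hnonneg p hp d
    · rw [hΦ d]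
      exact le_csSup (hV d) ⟨y d, hy d, rfl⟩
  have hAne : A.Nonempty := by
    obtain ⟨p, hp⟩ := hS
    choose y hy using hY
    exact ⟨_, p, hp, y, hy, rfl⟩
  have hAbdd : BddAbove A := by
    refine ⟨sSup B, fun a ha => ?_⟩
    obtain ⟨b, hb, hab⟩ := hAleB a ha
    exact hab.trans (le_csSup hbdd hb)
  have hBne : B.Nonempty := by
    obtain ⟨p, hp⟩ := hS
    exact ⟨_, p, hp, rfl⟩
  refine le_antisymm (csSup_le hAne fun a ha => ?_) (csSup_le hBne fun b hb => ?_)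
  · obtain ⟨b, hb, hab⟩ := hAleB a ha
    exact hab.trans (le_csSup hbdd hb)
  · rcases hb with ⟨p, hp, rfl⟩
    refine le_of_forall_pos_le_add fun ε hε => ?_
    have hy : ∀ d, ∃ z ∈ Y d, Φ d - ε < V d z := by
      intro d
      have : Φ d - ε < sSup (V d '' Y d) := by rw [← hΦ d]; linarith
      obtain ⟨v, hv, hlt⟩ := exists_lt_of_lt_csSup ((hY d).image _) this
      obtain ⟨z, hz, rfl⟩ := hv
      exact ⟨z, hz, hlt⟩
    choose y hyY hyV using hy
    have hmem : (f p + ∑ d, p.2 d * V d (y d)) ∈ A := ⟨p, hp, y, hyY, rfl⟩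
    have hle : f p + ∑ d, p.2 d * V d (y d) ≤ sSup A := le_csSup hAbdd hmem
    have hsum : ∑ d, p.2 d * Φ d ≤ (∑ d, p.2 d * V d (y d)) + ε := by
      have : ∑ d, p.2 d * Φ d ≤ ∑ d, p.2 d * (V d (y d) + ε) := by
        gcongr with d _
        · exact hnonneg p hp d
        · linarith [hyV d]
      calc ∑ d, p.2 d * Φ d ≤ ∑ d, p.2 d * (V d (y d) + ε) := this
        _ = (∑ d, p.2 d * V d (y d)) + (∑ d, p.2 d) * ε := by
            rw [Finset.sum_mul, ← Finset.sum_add_distrib]; exact Finset.sum_congr rfl fun d _ => by ring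
        _ = (∑ d, p.2 d * V d (y d)) + ε := by rw [(hsel p hp).2, one_mul]
    linarith
end

section
/- Let X and Z be types, D a finite nonempty index type, M a finite index type of child nodes, and S₀ ⊆ X × (D → ℝ) a nonempty set such that for every (x,δ) ∈ S₀, δ is a selection vector. Let f₀ : X × (D → ℝ) → ℝ; for each d ∈ D let N d be a finite subset of M; let π : M → ℝ with π m ≥ 0, Y : M → Set Z with Y m nonempty, and g : M → Z → ℝ with g m bounded above on Y m, and set Φ m := sSup (g m '' Y m). If the set { f₀(x,δ) + ∑_{d ∈ D} δ d * ∑_{m ∈ N d} π m * Φ m | (x,δ) ∈ S₀ } is bounded above, then sSup { f₀(x,δ) + ∑_{d ∈ D} δ d * ∑_{m ∈ N d} π m * g m (y m) | (x,δ) ∈ S₀, y : M → Z with y m ∈ Y m for all m ∈ M } = sSup { f₀(x,δ) + ∑_{d ∈ D} δ d * ∑_{m ∈ N d} π m * Φ m | (x,δ) ∈ S₀ }; i.e., the backward recursion that first computes the optimal child-node values Φ m and then solves the root problem yields the optimal value of the joint two-stage problem. -/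
/-- Exactness of the backward recursion for the two-stage (root plus children)
problem: first computing the optimal child-node values `Φ m = sSup (g m '' Y m)`
and then solving the root problem yields the optimal value of the joint problem. -/
theorem backward_recursion_exact {X Z M : Type*} {D : Type*}
    [Fintype D] [Nonempty D] [Fintype M]
    (S₀ : Set (X × (D → ℝ))) (hS : S₀.Nonempty)
    (hsel : ∀ p ∈ S₀, (∀ d, p.2 d = 0 ∨ p.2 d = 1) ∧ ∑ d, p.2 d = 1)
    (f₀ : X × (D → ℝ) → ℝ)
    (N : D → Finset M)
    (π : M → ℝ) (hπ : ∀ m, 0 ≤ π m)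
    (Y : M → Set Z) (hY : ∀ m, (Y m).Nonempty)
    (g : M → Z → ℝ) (hg : ∀ m, BddAbove (g m '' Y m))
    (Φ : M → ℝ) (hΦ : ∀ m, Φ m = sSup (g m '' Y m))
    (hbdd : BddAbove {v : ℝ | ∃ p ∈ S₀,
        v = f₀ p + ∑ d, p.2 d * ∑ m ∈ N d, π m * Φ m}) :
    sSup {v : ℝ | ∃ p ∈ S₀, ∃ y : M → Z, (∀ m, y m ∈ Y m) ∧
          v = f₀ p + ∑ d, p.2 d * ∑ m ∈ N d, π m * g m (y m)}
      = sSup {v : ℝ | ∃ p ∈ S₀,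
          v = f₀ p + ∑ d, p.2 d * ∑ m ∈ N d, π m * Φ m} := by
  set A := {v : ℝ | ∃ p ∈ S₀, ∃ y : M → Z, (∀ m, y m ∈ Y m) ∧
          v = f₀ p + ∑ d, p.2 d * ∑ m ∈ N d, π m * g m (y m)} with hAdef
  set B := {v : ℝ | ∃ p ∈ S₀,
          v = f₀ p + ∑ d, p.2 d * ∑ m ∈ N d, π m * Φ m} with hBdef
  have hδnn : ∀ p ∈ S₀, ∀ d, (0:ℝ) ≤ p.2 d := by
    intro p hp d
    rcases (hsel p hp).1 d with h | h <;> rw [h] <;> norm_num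
  have hδle1 : ∀ p ∈ S₀, ∀ d, p.2 d ≤ 1 := by
    intro p hp d
    rcases (hsel p hp).1 d with h | h <;> rw [h] <;> norm_num
  have hgle : ∀ m, ∀ z ∈ Y m, g m z ≤ Φ m := by
    intro m z hz
    rw [hΦ]
    exact le_csSup (hg m) ⟨z, hz, rfl⟩
  -- pointwise domination: every element of A is ≤ a corresponding element of B
  have key : ∀ a ∈ A, ∃ b ∈ B, a ≤ b := by
    rintro a ⟨p, hp, y, hy, rfl⟩
    refine ⟨_, ⟨p, hp, rfl⟩, ?_⟩
    gcongr with d _ m hm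
    · exact hδnn p hp d
    · exact hπ m
    · exact hgle m (y m) (hy m)
  have hBne : B.Nonempty := by
    obtain ⟨p, hp⟩ := hS
    exact ⟨_, p, hp, rfl⟩
  have hAne : A.Nonempty := by
    obtain ⟨p, hp⟩ := hS
    choose y hy using hY
    exact ⟨_, p, hp, y, hy, rfl⟩
  have hAbdd : BddAbove A := by
    refine ⟨sSup B, fun a ha => ?_⟩
    obtain ⟨b, hb, hab⟩ := key a ha
    exact hab.trans (le_csSup hbdd hb)
  apply le_antisymm
  · apply csSup_le hAne
    intro a ha
    obtain ⟨b, hb, hab⟩ := key a ha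
    exact hab.trans (le_csSup hbdd hb)
  · apply csSup_le hBne
    rintro b ⟨p, hp, rfl⟩
    rw [le_csSup_iff hAbdd hAne]
    intro ub hub
    refine le_of_forall_pos_le_add fun ε hε => ?_
    set K : ℝ := ∑ d : D, ∑ m ∈ N d, π m with hKdef
    have hK : 0 ≤ K := Finset.sum_nonneg fun d _ =>
      Finset.sum_nonneg fun m _ => hπ m
    set ε' : ℝ := ε / (K + 1) with hε'def
    have hε' : 0 < ε' := div_pos hε (by linarith)
    have hchoice : ∀ m : M, ∃ z ∈ Y m, Φ m - ε' < g m z := by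
      intro m
      have hlt : Φ m - ε' < sSup (g m '' Y m) := by
        rw [← hΦ]; linarith
      obtain ⟨w, hw, hlt'⟩ := exists_lt_of_lt_csSup ((hY m).image (g m)) hlt
      obtain ⟨z, hz, rfl⟩ := hw
      exact ⟨z, hz, hlt'⟩
    choose y hy hylt using hchoice
    have hamem : (f₀ p + ∑ d, p.2 d * ∑ m ∈ N d, π m * g m (y m)) ∈ A :=
      ⟨p, hp, y, hy, rfl⟩
    have ha := hub hamem
    -- bound the gap
    have hgap : ∑ d, p.2 d * ∑ m ∈ N d, π m * Φ m
        ≤ (∑ d, p.2 d * ∑ m ∈ N d, π m * g m (y m)) + ε := by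
      have h1 : ∀ d : D, p.2 d * ∑ m ∈ N d, π m * Φ m
          ≤ p.2 d * ∑ m ∈ N d, π m * g m (y m) + ∑ m ∈ N d, π m * ε' := by
        intro d
        have h2 : p.2 d * ∑ m ∈ N d, π m * Φ m
            ≤ p.2 d * ∑ m ∈ N d, π m * g m (y m)
              + p.2 d * ∑ m ∈ N d, π m * ε' := by
          rw [← mul_add]
          apply mul_le_mul_of_nonneg_left _ (hδnn p hp d)
          rw [← Finset.sum_add_distrib]
          apply Finset.sum_le_sum
          intro m _
          rw [← mul_add]
          exact mul_le_mul_of_nonneg_left (by linarith [hylt m]) (hπ m)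
        have h3 : p.2 d * ∑ m ∈ N d, π m * ε' ≤ ∑ m ∈ N d, π m * ε' := by
          have hnn : 0 ≤ ∑ m ∈ N d, π m * ε' :=
            Finset.sum_nonneg fun m _ => mul_nonneg (hπ m) hε'.le
          nlinarith [hδle1 p hp d, hδnn p hp d]
        linarith
      have h4 : ∑ d, p.2 d * ∑ m ∈ N d, π m * Φ m
          ≤ (∑ d, p.2 d * ∑ m ∈ N d, π m * g m (y m))
            + ∑ d : D, ∑ m ∈ N d, π m * ε' := by
        rw [← Finset.sum_add_distrib]
        exact Finset.sum_le_sum fun d _ => h1 d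
      have h5 : ∑ d : D, ∑ m ∈ N d, π m * ε' = K * ε' := by
        rw [hKdef, Finset.sum_mul]
        congr 1
        ext d
        rw [Finset.sum_mul]
      have h6 : K * ε' ≤ ε := by
        rw [hε'def]
        rw [div_eq_inv_mul, ← mul_assoc]
        have : K * (K + 1)⁻¹ ≤ 1 := by
          rw [mul_inv_le_iff₀ (by linarith)]
          linarith
        nlinarith
      linarith [h4, h5 ▸ h4]
    linarith
end
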